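/- Let R be a commutative ring, Λ an R-algebra, and G a finite group. Regard Hom_R(Λ, R) as a right Λ-module via (f · b)(c) = f(bc), and regard Hom_R(MonoidAlgebra Λ G, R) as a right MonoidAlgebra Λ G-module via (f · u)(v) = f(u v). If Hom_R(Λ, R) is projective as a right Λ-module, then Hom_R(MonoidAlgebra Λ G, R) is projective as a right MonoidAlgebra Λ G-module. In other words, if Λ is a quasi-Frobenius algebra relative to R, then so is the group algebra Λ[G] = MonoidAlgebra Λ G. -/

import Mathlib

/-!
A functional `F` on `Λ[G]` is determined by its components `F ∘ single g ∈ Hom_R(Λ, R)`, and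
right multiplication by `g λ` sends the `k`-th component to the `(g k)`-th one times `λ`.
Applying a `Λ`-splitting `s` of `Hom_R(Λ, R)` into a free module to the `k`-th component,
shifting the coefficients by `k⁻¹` and summing over `G` (Higman's averaging) gives a splitting
of `Hom_R(Λ[G], R)` into a free `Λ[G]`-module: the sum is `Λ[G]`-linear because `g` only permutes
its terms, and it is a section because only the `k = g` term survives in the `g`-th component.
-/

section

variable (R : Type*) [CommRing R]

/-- The right `A`-module structure on `Hom_R(A, R)` given by `(f · b)(c) = f (b * c)`,
encoded as a module structure over the opposite ring `Aᵐᵒᵖ`. -/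
noncomputable instance rightDualSMul (A : Type*) [Ring A] [Algebra R A] :
    SMul Aᵐᵒᵖ (A →ₗ[R] R) :=
  ⟨fun b f => f.comp (LinearMap.mulLeft R b.unop)⟩

theorem rightDual_smul_apply {A : Type*} [Ring A] [Algebra R A]
    (b : Aᵐᵒᵖ) (f : A →ₗ[R] R) (c : A) :
    (b • f) c = f (b.unop * c) := rfl

noncomputable instance rightDualModule (A : Type*) [Ring A] [Algebra R A] :
    Module Aᵐᵒᵖ (A →ₗ[R] R) where
  one_smul f := LinearMap.ext fun c => by simp [rightDual_smul_apply]
  mul_smul a b f := LinearMap.ext fun c => by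
    simp [rightDual_smul_apply, mul_assoc]
  smul_zero a := LinearMap.ext fun c => rfl
  smul_add a f g := LinearMap.ext fun c => rfl
  add_smul a b f := LinearMap.ext fun c => by
    simp [rightDual_smul_apply, add_mul]
  zero_smul f := LinearMap.ext fun c => by
    simp [rightDual_smul_apply]

open MonoidAlgebra MulOpposite

namespace MonoidAlgebra

lemma op_smul_eq_smul_of_op_single_smul {Λ G M N : Type*} [Semiring Λ] [Monoid G]
    [AddCommMonoid M] [AddCommMonoid N]
    [Module (MonoidAlgebra Λ G)ᵐᵒᵖ M] [Module (MonoidAlgebra Λ G)ᵐᵒᵖ N] (f : M →+ N)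
    (hf : ∀ (g : G) (a : Λ) x, f (op (single g a) • x) = op (single g a) • f x)
    (c : (MonoidAlgebra Λ G)ᵐᵒᵖ) (x : M) : f (c • x) = c • f x := by
  induction c using MulOpposite.rec' with | h u => ?_
  induction u using MonoidAlgebra.induction_linear with
  | zero => simp
  | add u v hu hv => simp only [op_add, add_smul, map_add, hu, hv]
  | single g a => exact hf g a x

variable {R} (Λ : Type*) [Ring Λ] [Algebra R Λ] {G : Type*}

noncomputable def dualComponent (g : G) : (MonoidAlgebra Λ G →ₗ[R] R) →+ (Λ →ₗ[R] R) where
  toFun F := F ∘ₗ lsingle g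
  map_zero' := rfl
  map_add' _ _ := rfl

variable {Λ}

lemma dualComponent_apply (g : G) (F : MonoidAlgebra Λ G →ₗ[R] R) (a : Λ) :
    dualComponent Λ g F a = F (single g a) := rfl

lemma dualComponent_op_single_smul [Monoid G] (g k : G) (a : Λ) (F : MonoidAlgebra Λ G →ₗ[R] R) :
    dualComponent Λ k (op (single g a) • F) = op a • dualComponent Λ (g * k) F := by
  ext b
  simp only [dualComponent_apply, rightDual_smul_apply, unop_op, single_mul_single]

lemma ext_dualComponent {F F' : MonoidAlgebra Λ G →ₗ[R] R}
    (h : ∀ g, dualComponent Λ g F = dualComponent Λ g F') : F = F' :=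
  lhom_ext' fun g => h g

variable [Group G]

variable (G) in
noncomputable def dualOfCoeffOne (d : Λ →ₗ[R] R) : MonoidAlgebra Λ G →ₗ[R] R :=
  d ∘ₗ Finsupp.lapply 1 ∘ₗ (coeffLinearEquiv R).toLinearMap

lemma dualComponent_op_single_smul_dualOfCoeffOne [DecidableEq G] (g k : G) (a : Λ)
    (d : Λ →ₗ[R] R) :
    dualComponent Λ g (op (single k⁻¹ a) • dualOfCoeffOne G d) =
      if k = g then op a • d else 0 := by
  ext b
  simp only [dualComponent_apply, rightDual_smul_apply, unop_op, single_mul_single,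
    dualOfCoeffOne, LinearMap.comp_apply]
  by_cases hkg : k = g <;>
    simp [hkg, inv_mul_eq_one, rightDual_smul_apply, coeff_single]

variable {ι : Type*}

lemma dualComponent_linearCombination_mapRange [DecidableEq G] (v : ι → Λ →ₗ[R] R) (g k : G)
    (x : ι →₀ Λᵐᵒᵖ) :
    dualComponent Λ g (Finsupp.linearCombination (MonoidAlgebra Λ G)ᵐᵒᵖ (dualOfCoeffOne G ∘ v)
        (Finsupp.mapRange.addMonoidHom (AddMonoidHom.mulOp (singleAddHom k⁻¹)) x)) =
      if k = g then Finsupp.linearCombination Λᵐᵒᵖ v x else 0 := by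
  induction x using Finsupp.induction_linear with
  | zero => simp
  | add x y hx hy => simp only [map_add, hx, hy]; split_ifs <;> simp
  | single i a =>
    simp [dualComponent_op_single_smul_dualOfCoeffOne]

variable [Fintype G]

noncomputable def liftSplitting (s : (Λ →ₗ[R] R) →ₗ[Λᵐᵒᵖ] (ι →₀ Λᵐᵒᵖ)) :
    (MonoidAlgebra Λ G →ₗ[R] R) →+ (ι →₀ (MonoidAlgebra Λ G)ᵐᵒᵖ) :=
  ∑ k : G, (Finsupp.mapRange.addMonoidHom (AddMonoidHom.mulOp (singleAddHom k⁻¹))).comp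
    (s.toAddMonoidHom.comp (dualComponent Λ k))

lemma liftSplitting_apply (s : (Λ →ₗ[R] R) →ₗ[Λᵐᵒᵖ] (ι →₀ Λᵐᵒᵖ))
    (F : MonoidAlgebra Λ G →ₗ[R] R) :
    liftSplitting s F = ∑ k : G, Finsupp.mapRange.addMonoidHom
      (AddMonoidHom.mulOp (singleAddHom k⁻¹)) (s (dualComponent Λ k F)) :=
  AddMonoidHom.finsetSum_apply _ _ _

lemma liftSplitting_op_single_smul (s : (Λ →ₗ[R] R) →ₗ[Λᵐᵒᵖ] (ι →₀ Λᵐᵒᵖ)) (g : G) (a : Λ)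
    (F : MonoidAlgebra Λ G →ₗ[R] R) :
    liftSplitting s (op (single g a) • F) = op (single g a) • liftSplitting s F := by
  simp only [liftSplitting_apply, Finset.smul_sum]
  refine Fintype.sum_equiv (Equiv.mulLeft g) _ _ fun k => ?_
  ext i
  simp only [Function.comp_apply, dualComponent_op_single_smul, map_smul,
    Finsupp.mapRange.addMonoidHom_apply, Finsupp.mapRange_apply, Finsupp.coe_smul, Pi.smul_apply,
    smul_eq_mul, AddMonoidHom.mulOp_apply_apply, unop_mul, unop_op, singleAddHom_apply,
    Equiv.coe_mulLeft, mul_inv_rev]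
  rw [← op_mul, single_mul_single, mul_assoc, inv_mul_cancel, mul_one]

noncomputable def liftSplittingₗ (s : (Λ →ₗ[R] R) →ₗ[Λᵐᵒᵖ] (ι →₀ Λᵐᵒᵖ)) :
    (MonoidAlgebra Λ G →ₗ[R] R) →ₗ[(MonoidAlgebra Λ G)ᵐᵒᵖ] (ι →₀ (MonoidAlgebra Λ G)ᵐᵒᵖ) where
  toFun := liftSplitting s
  map_add' := map_add _
  map_smul' := op_smul_eq_smul_of_op_single_smul _ (liftSplitting_op_single_smul s)

lemma linearCombination_comp_liftSplittingₗ (v : ι → Λ →ₗ[R] R)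
    (s : (Λ →ₗ[R] R) →ₗ[Λᵐᵒᵖ] (ι →₀ Λᵐᵒᵖ))
    (hs : Finsupp.linearCombination Λᵐᵒᵖ v ∘ₗ s = .id) :
    Finsupp.linearCombination (MonoidAlgebra Λ G)ᵐᵒᵖ (dualOfCoeffOne G ∘ v) ∘ₗ liftSplittingₗ s =
      .id := by
  classical
  ext1 F
  refine ext_dualComponent fun g => ?_
  have hF := congr($hs (dualComponent Λ g F))
  simp only [LinearMap.comp_apply, LinearMap.id_apply] at hF ⊢
  simp only [liftSplittingₗ, LinearMap.coe_mk, AddHom.coe_mk, liftSplitting_apply, map_sum,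
    dualComponent_linearCombination_mapRange, Finset.sum_ite_eq', Finset.mem_univ, if_true, hF]

end MonoidAlgebra

/-- If `Λ` is a quasi-Frobenius algebra relative to `R`, i.e. the dual `Hom_R(Λ, R)`
(with right action `(f · b)(c) = f (b * c)`) is projective as a right `Λ`-module, and
`G` is a finite group, then the group algebra `MonoidAlgebra Λ G` is again
quasi-Frobenius relative to `R`: `Hom_R(MonoidAlgebra Λ G, R)` (with right action
`(f · u)(v) = f (u * v)`) is projective as a right `MonoidAlgebra Λ G`-module. -/
theorem stmt12 (Λ : Type*) [Ring Λ] [Algebra R Λ] (G : Type*) [Group G] [Finite G]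
    (h : Module.Projective Λᵐᵒᵖ (Λ →ₗ[R] R)) :
    Module.Projective (MonoidAlgebra Λ G)ᵐᵒᵖ (MonoidAlgebra Λ G →ₗ[R] R) := by
  have := Fintype.ofFinite G
  obtain ⟨s, hs⟩ := Module.projective_def'.mp h
  exact .of_split (liftSplittingₗ s) _ (linearCombination_comp_liftSplittingₗ id s hs)

end
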